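/- Let k ≥ 2, and let 𝒢 = {{k+2, k+3, …, 2k}} be the single-gee collection arising from the equilateral (2k+1)-gon, with n = 2k+1 and m = 2k−2. Then every algebra R of type (𝒢, m, n) satisfies zcl(R) = 2k. -/

import Mathlib

open scoped TensorProduct

/-- `[k] = {1,…,k}` as a finset of positive integers. -/
def bra (k : ℕ) : Finset ℕ+ := (Finset.range k).image (fun i => ⟨i + 1, i.succ_pos⟩)

/-- The domination order on finite multisets of positive integers: `MLE S T` holds iff there
is a submultiset `T'` of `T` that can be matched up with `S` so that each element of `S` is
at most its partner in `T'`. -/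
def MLE (S T : Multiset ℕ+) : Prop := ∃ T' ≤ T, Multiset.Rel (· ≤ ·) S T'

/-- `S` is a subgee of the collection `𝒢` of gees. -/
def Subgee (𝒢 : Finset (Finset ℕ+)) (S : Finset ℕ+) : Prop := ∃ G ∈ 𝒢, MLE S.val G.val

/-- `rho i T` is the number of elements of `T` greater than `i`. -/
def rho (i : ℕ+) (T : Finset ℕ+) : ℕ := (T.filter (fun t => i < t)).card

/-- The ordered monomial `V_S = V_{s₁} ⋯ V_{s_k}` for `S = {s₁ < ⋯ < s_k}`. -/
def VSmon {R : Type} [Ring R] (V : ℕ+ → R) (S : Finset ℕ+) : R :=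
  ((S.sort (· ≤ ·)).map V).prod

/-- An algebra of type `(𝒢, m, n)`. -/
structure IsPolygonAlgebra (n m : ℕ) (𝒢 : Finset (Finset ℕ+))
    (R : Type) [Ring R] [Algebra ℚ R] [FiniteDimensional ℚ R]
    (𝒜 : ℕ → Submodule ℚ R) [GradedAlgebra 𝒜]
    (V : ℕ+ → R) (W : Finset ℕ+ → R) : Prop where
  hn : 4 ≤ n
  hm : 1 ≤ m
  gee_nonempty : 𝒢.Nonempty
  gee_sub : ∀ G ∈ 𝒢, G ⊆ bra (n - 1)
  gee_incomp : ∀ G ∈ 𝒢, ∀ G' ∈ 𝒢, MLE G.val G'.val → G = G'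
  gee_card : ∀ G ∈ 𝒢, G.card ≤ m - 1
  gcomm : ∀ (i j : ℕ) (x y : R), x ∈ 𝒜 i → y ∈ 𝒜 j →
    x * y = ((-1 : ℚ)) ^ (i * j) • (y * x)
  V_mem : ∀ i : ℕ+, (i : ℕ) ≤ n - 1 → V i ∈ 𝒜 1
  W_mem : ∀ S : Finset ℕ+, Subgee 𝒢 S → W S ∈ 𝒜 (m - S.card)
  VS_ne : ∀ S : Finset ℕ+, S ⊆ bra (n - 1) → (VSmon V S ≠ 0 ↔ Subgee 𝒢 S)
  basis_indep : LinearIndependent ℚ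
    (Sum.elim (fun S : {S : Finset ℕ+ // Subgee 𝒢 S} => VSmon V S.1)
      (fun S : {S : Finset ℕ+ // Subgee 𝒢 S} => W S.1))
  basis_span : Submodule.span ℚ (Set.range
    (Sum.elim (fun S : {S : Finset ℕ+ // Subgee 𝒢 S} => VSmon V S.1)
      (fun S : {S : Finset ℕ+ // Subgee 𝒢 S} => W S.1))) = ⊤
  VW : ∀ S S' : Finset ℕ+, Subgee 𝒢 S → Subgee 𝒢 S' → S.card = S'.card →
    VSmon V S * W S' = if S = S' then W ∅ else 0
  WW : ∀ S S' : Finset ℕ+, Subgee 𝒢 S → Subgee 𝒢 S' → S.card + S'.card = m →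
    W S * W S' = 0

/-- `R` has no exotic products. -/
def NoExoticProducts (n : ℕ) (𝒢 : Finset (Finset ℕ+))
    {R : Type} [Ring R] [Algebra ℚ R] (V : ℕ+ → R) (W : Finset ℕ+ → R) : Prop :=
  (∀ S S' : Finset ℕ+, Subgee 𝒢 S → Subgee 𝒢 S' → W S * W S' = 0) ∧
  (∀ i : ℕ+, (i : ℕ) ≤ n - 1 → ∀ S : Finset ℕ+, Subgee 𝒢 S →
    (i ∈ S → V i * W S = ((-1 : ℚ)) ^ (rho i (S.erase i)) • W (S.erase i)) ∧
    (i ∉ S → V i * W S = 0))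

section Tensor

variable {R : Type} [Ring R] [Algebra ℚ R] (𝒜 : ℕ → Submodule ℚ R) [GradedAlgebra 𝒜]

/-- The multiplication map `μ : R ⊗̂ R → R`. -/
noncomputable def muMap : (𝒜 ᵍ⊗[ℚ] 𝒜) →ₗ[ℚ] R :=
  (LinearMap.mul' ℚ R).comp (GradedTensorProduct.of ℚ 𝒜 𝒜).symm.toLinearMap

/-- `x ⊗ y` as an element of the graded tensor product `R ⊗̂ R`. -/
noncomputable def tm (x y : R) : 𝒜 ᵍ⊗[ℚ] 𝒜 := GradedTensorProduct.of ℚ 𝒜 𝒜 (x ⊗ₜ y)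

/-- `ū = u ⊗ 1 - 1 ⊗ u`. -/
noncomputable def ubar (u : R) : 𝒜 ᵍ⊗[ℚ] 𝒜 := tm 𝒜 u 1 - tm 𝒜 1 u

/-- `V̄_D = ∏_{i ∈ D} V̄ᵢ` with factors in increasing order of `i`. -/
noncomputable def Vbar (V : ℕ+ → R) (D : Finset ℕ+) : 𝒜 ᵍ⊗[ℚ] 𝒜 :=
  ((D.sort (· ≤ ·)).map (fun i => ubar 𝒜 (V i))).prod

/-- The set of `k` such that some product of `k` zero divisors in `R ⊗̂ R` is nonzero;
`zcl R` is the greatest element of this set. -/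
def zclSet : Set ℕ :=
  {k : ℕ | ∃ L : List (𝒜 ᵍ⊗[ℚ] 𝒜), L.length = k ∧
    (∀ x ∈ L, muMap 𝒜 x = 0) ∧ L.prod ≠ 0}

end Tensor

/-!
Let `s = k - 1`, the size of the gee `G = {k+2, …, 2k}`; every subgee has at most `s` elements
and `m = 2s`. Give the basis element `V_S` the weight `|S|` and `W_T` the weight `s + 1 - |T|`.
In degrees above `s` only `W`'s live, and there multiplication by the monomials `V_S` pairs
perfectly into `R_m = ℚ W_∅`. Pairing shows that `V_S W_T` is a multiple of `W_{T \ S}` if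
`S ⊆ T` and vanishes otherwise, and that `W_S W_T = 0`, so products of basis elements never
lower the weight. The induced filtration of `R ⊗̂ R` is multiplicative, zero divisors lie in
weight `≥ 1`, and no weight exceeds `2s + 2 = 2k`; hence `zcl(R) ≤ 2k`.

Conversely, `A = [k-1]` is a subgee disjoint from `G` with `|A| + |G| = m`. Since `V_j W_A = 0`
for `j ∈ G` and `V_j W_∅ = 0`, the factor `V̄_G` acts on `W̄_A W̄_G = -W_A ⊗ W_G ± W_G ⊗ W_A`
only through `V_G W_G = W_∅`, and then `V̄_A` only through `V_A W_A = W_∅`. The signs make the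
two terms add up, so this product of `2k` zero divisors is `-2 W_∅ ⊗ W_∅ ≠ 0`.
-/

theorem mem_bra {a : ℕ+} {t : ℕ} : a ∈ bra t ↔ (a : ℕ) ≤ t := by
  change a ∈ (Finset.range t).image Nat.succPNat ↔ _
  simp only [Finset.mem_image, Finset.mem_range, ← PNat.coe_inj, Nat.succPNat_coe]
  have := a.pos
  exact ⟨fun ⟨i, hi, hia⟩ => by omega, fun ha => ⟨a - 1, by omega, by omega⟩⟩

theorem card_bra (t : ℕ) : (bra t).card = t := by
  change ((Finset.range t).image Nat.succPNat).card = t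
  rw [Finset.card_image_of_injective _ Nat.succPNat_injective, Finset.card_range]

theorem MLE.of_le {S S' T : Multiset ℕ+} (hS : S ≤ S') (h : MLE S' T) : MLE S T := by
  obtain ⟨T', hT', hrel⟩ := h
  obtain ⟨U, rfl⟩ := Multiset.le_iff_exists_add.1 hS
  obtain ⟨T₀, _, hrel₀, _, rfl⟩ := Multiset.rel_add_left.1 hrel
  exact ⟨T₀, (Multiset.le_add_right _ _).trans hT', hrel₀⟩

theorem MLE.of_forall_le {S T : Multiset ℕ+} (hcard : Multiset.card S = Multiset.card T)
    (hle : ∀ a ∈ S, ∀ b ∈ T, a ≤ b) : MLE S T :=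
  ⟨T, le_rfl, Multiset.rel_of_forall (fun a b ha hb => hle a ha b hb) hcard⟩

namespace Subgee

variable {𝒢 : Finset (Finset ℕ+)} {S T : Finset ℕ+}

theorem empty (h𝒢 : 𝒢.Nonempty) : Subgee 𝒢 ∅ :=
  let ⟨G, hG⟩ := h𝒢
  ⟨G, hG, 0, Multiset.zero_le _, Multiset.Rel.zero⟩

theorem of_mem {G : Finset ℕ+} (hG : G ∈ 𝒢) : Subgee 𝒢 G :=
  ⟨G, hG, G.val, le_rfl, Multiset.rel_refl_of_refl_on fun _ _ => le_rfl⟩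

theorem of_subset (hT : Subgee 𝒢 T) (hST : S ⊆ T) : Subgee 𝒢 S :=
  let ⟨G, hG, hTG⟩ := hT
  ⟨G, hG, hTG.of_le (Finset.val_le_iff.2 hST)⟩

theorem exists_card_le (hS : Subgee 𝒢 S) : ∃ G ∈ 𝒢, S.card ≤ G.card := by
  obtain ⟨G, hG, T', hT', hrel⟩ := hS
  exact ⟨G, hG, (Multiset.card_eq_card_of_rel hrel).trans_le (Multiset.card_le_card hT')⟩

theorem subset_bra {t : ℕ} (h𝒢 : ∀ G ∈ 𝒢, G ⊆ bra t) (hS : Subgee 𝒢 S) : S ⊆ bra t := by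
  obtain ⟨G, hG, T', hT', hrel⟩ := hS
  intro a ha
  obtain ⟨b, hb, hab⟩ := Multiset.exists_mem_of_rel_of_mem hrel ha
  exact mem_bra.2 <| ((PNat.coe_le_coe _ _).2 hab).trans
    (mem_bra.1 (h𝒢 G hG (Multiset.mem_of_le hT' hb)))

end Subgee

section Anticomm

variable {ι A : Type*} [Ring A] [Algebra ℚ A] {v : ι → A}

theorem List.Perm.prod_map_eq_smul_of_anticomm {l₁ l₂ : List ι} (hp : l₁.Perm l₂)
    (hv : ∀ a ∈ l₁, ∀ b ∈ l₁, v a * v b = -(v b * v a)) :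
    ∃ c : ℚ, c ≠ 0 ∧ (l₁.map v).prod = c • (l₂.map v).prod := by
  induction hp with
  | nil => exact ⟨1, one_ne_zero, by simp⟩
  | cons a _ ih =>
    obtain ⟨c, hc, he⟩ := ih fun x hx y hy => hv x (.tail _ hx) y (.tail _ hy)
    exact ⟨c, hc, by simp [he]⟩
  | swap a b l =>
    refine ⟨-1, by norm_num, ?_⟩
    simp [← mul_assoc, hv b (by simp) a (by simp)]
  | trans hp₁ _ ih₁ ih₂ =>
    obtain ⟨c₁, hc₁, he₁⟩ := ih₁ hv
    obtain ⟨c₂, hc₂, he₂⟩ := ih₂ fun x hx y hy => hv x (hp₁.mem_iff.2 hx) y (hp₁.mem_iff.2 hy)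
    exact ⟨c₁ * c₂, mul_ne_zero hc₁ hc₂, by rw [he₁, he₂, smul_smul]⟩

theorem List.prod_map_eq_zero_of_anticomm {l : List ι} (hl : ¬l.Nodup)
    (hv : ∀ a ∈ l, ∀ b ∈ l, v a * v b = -(v b * v a)) : (l.map v).prod = 0 := by
  have := IsAddTorsionFree.of_module_rat A
  obtain ⟨a, ha⟩ := not_forall_not.1 (mt List.nodup_iff_sublist.2 hl)
  obtain ⟨l', hp⟩ := ha.exists_perm_append
  have haa : v a * v a = 0 := self_eq_neg.1 (hv a (ha.subset (by simp)) a (ha.subset (by simp)))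
  obtain ⟨c, -, he⟩ := hp.prod_map_eq_smul_of_anticomm hv
  simp [he, ← mul_assoc, haa]

end Anticomm

section VSmon

variable {A : Type} [Ring A] {V : ℕ+ → A} {S T : Finset ℕ+}

theorem VSmon_empty : VSmon V ∅ = 1 := by
  simp [VSmon]

theorem VSmon_singleton (a : ℕ+) : VSmon V {a} = V a := by
  simp [VSmon]

theorem VSmon_mul_VSmon_eq_prod_append :
    VSmon V S * VSmon V T = ((S.sort (· ≤ ·) ++ T.sort (· ≤ ·)).map V).prod := by
  rw [List.map_append, List.prod_append, VSmon, VSmon]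

variable [Algebra ℚ A] (hV : ∀ a ∈ S ∪ T, ∀ b ∈ S ∪ T, V a * V b = -(V b * V a))
include hV

theorem VSmon_mul_VSmon_of_disjoint (hST : Disjoint S T) :
    ∃ c : ℚ, c ≠ 0 ∧ VSmon V S * VSmon V T = c • VSmon V (S ∪ T) := by
  have hnd : (S.sort (· ≤ ·) ++ T.sort (· ≤ ·)).Nodup :=
    List.nodup_append.2 ⟨S.sort_nodup _, T.sort_nodup _, fun a ha b hb hab =>
      Finset.disjoint_left.1 hST ((Finset.mem_sort _).1 ha) (hab ▸ (Finset.mem_sort _).1 hb)⟩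
  have hp : (S.sort (· ≤ ·) ++ T.sort (· ≤ ·)).Perm ((S ∪ T).sort (· ≤ ·)) :=
    (List.perm_ext_iff_of_nodup hnd ((S ∪ T).sort_nodup _)).2 fun a => by simp
  rw [VSmon_mul_VSmon_eq_prod_append]
  exact hp.prod_map_eq_smul_of_anticomm fun a ha b hb =>
    hV a (by simpa using ha) b (by simpa using hb)

theorem VSmon_mul_VSmon_of_not_disjoint (hST : ¬Disjoint S T) : VSmon V S * VSmon V T = 0 := by
  obtain ⟨a, haS, haT⟩ := Finset.not_disjoint_iff.1 hST
  rw [VSmon_mul_VSmon_eq_prod_append]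
  refine List.prod_map_eq_zero_of_anticomm (fun hnd => ?_) fun a ha b hb =>
    hV a (by simpa using ha) b (by simpa using hb)
  exact List.disjoint_of_nodup_append hnd ((Finset.mem_sort _).2 haS) ((Finset.mem_sort _).2 haT)

end VSmon

section GradedTensor

variable {R : Type} [Ring R] [Algebra ℚ R] {𝒜 : ℕ → Submodule ℚ R} [GradedAlgebra 𝒜]
  {x y : R} {p q : ℕ}

theorem List.prod_mem_graded_length {L : List R} (hL : ∀ u ∈ L, u ∈ 𝒜 1) :
    L.prod ∈ 𝒜 L.length := by
  simpa using SetLike.list_prod_map_mem_graded (A := 𝒜) L (fun _ => 1) id hL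

theorem muMap_tm (x y : R) : muMap 𝒜 (tm 𝒜 x y) = x * y := by
  simp [muMap, tm]

theorem muMap_ubar (u : R) : muMap 𝒜 (ubar 𝒜 u) = 0 := by
  rw [ubar, map_sub, muMap_tm, muMap_tm, mul_one, one_mul, sub_self]

theorem tm_zero_left (y : R) : tm 𝒜 0 y = 0 := by
  rw [tm, TensorProduct.zero_tmul, map_zero]

theorem tm_zero_right (x : R) : tm 𝒜 x 0 = 0 := by
  rw [tm, TensorProduct.tmul_zero, map_zero]

theorem tm_mul_tm (x y' : R) {y x' : R} (hy : y ∈ 𝒜 p) (hx' : x' ∈ 𝒜 q) :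
    tm 𝒜 x y * tm 𝒜 x' y' = (-1 : ℚ) ^ (p * q) • tm 𝒜 (x * x') (y * y') := by
  have := GradedTensorProduct.tmul_coe_mul_coe_tmul (R := ℚ) 𝒜 𝒜 x ⟨y, hy⟩ ⟨x', hx'⟩ y'
  change x ᵍ⊗ₜ[ℚ] y * x' ᵍ⊗ₜ[ℚ] y' = _ • (x * x') ᵍ⊗ₜ[ℚ] (y * y')
  rcases (p * q).even_or_odd with he | ho
  · simpa [he.neg_one_pow] using this
  · simpa [ho.neg_one_pow, Units.smul_def] using this

theorem ubar_mul_tm {u : R} (y : R) (hu : u ∈ 𝒜 1) (hx : x ∈ 𝒜 p) :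
    ubar 𝒜 u * tm 𝒜 x y = tm 𝒜 (u * x) y - (-1 : ℚ) ^ p • tm 𝒜 x (u * y) := by
  rw [ubar, sub_mul, tm_mul_tm u y (SetLike.one_mem_graded 𝒜) hx, tm_mul_tm 1 y hu hx]
  simp

theorem ubar_mul_ubar (hx : x ∈ 𝒜 p) (hy : y ∈ 𝒜 q) (hxy : x * y = 0) :
    ubar 𝒜 x * ubar 𝒜 y = -tm 𝒜 x y - (-1 : ℚ) ^ (p * q) • tm 𝒜 y x := by
  have h1 := SetLike.one_mem_graded 𝒜
  rw [ubar, ubar, sub_mul, mul_sub, mul_sub, tm_mul_tm x 1 h1 hy, tm_mul_tm x y h1 h1,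
    tm_mul_tm 1 1 hx hy, tm_mul_tm 1 y hx h1, hxy, tm_zero_left, tm_zero_right]
  simp

theorem List.prod_map_ubar_mul_tm_of_mul_right {L : List R}
    (hL : ∀ u ∈ L, u ∈ 𝒜 1 ∧ u * y = 0) (hx : x ∈ 𝒜 p) :
    (L.map (ubar 𝒜)).prod * tm 𝒜 x y = tm 𝒜 (L.prod * x) y := by
  induction L with
  | nil => simp
  | cons u L ih =>
    obtain ⟨hu, huy⟩ := hL u List.mem_cons_self
    have hL' := fun v hv => hL v (List.mem_cons_of_mem u hv)
    have hLx := SetLike.mul_mem_graded (List.prod_mem_graded_length fun v hv => (hL' v hv).1) hx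
    rw [List.map_cons, List.prod_cons, mul_assoc, ih hL', ubar_mul_tm y hu hLx, huy,
      tm_zero_right, smul_zero, sub_zero, List.prod_cons, mul_assoc]

theorem List.prod_map_ubar_mul_tm_of_mul_left {L : List R}
    (hL : ∀ u ∈ L, u ∈ 𝒜 1 ∧ u * x = 0) (hx : x ∈ 𝒜 p) :
    (L.map (ubar 𝒜)).prod * tm 𝒜 x y =
      (-1 : ℚ) ^ ((p + 1) * L.length) • tm 𝒜 x (L.prod * y) := by
  induction L with
  | nil => simp
  | cons u L ih =>
    obtain ⟨hu, hux⟩ := hL u List.mem_cons_self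
    rw [List.map_cons, List.prod_cons, mul_assoc, ih fun v hv => hL v (List.mem_cons_of_mem u hv),
      mul_smul_comm, ubar_mul_tm _ hu hx, hux, tm_zero_left, zero_sub, smul_neg, smul_smul,
      List.prod_cons, mul_assoc, ← neg_smul, List.length_cons]
    congr 1
    ring

theorem Vbar_eq_prod_map_ubar (V : ℕ+ → R) (D : Finset ℕ+) :
    Vbar 𝒜 V D = (((D.sort (· ≤ ·)).map V).map (ubar 𝒜)).prod := by
  rw [Vbar, List.map_map]
  rfl

end GradedTensor

abbrev PolyIdx (𝒢 : Finset (Finset ℕ+)) :=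
  {S : Finset ℕ+ // Subgee 𝒢 S} ⊕ {S : Finset ℕ+ // Subgee 𝒢 S}

def polyBasis {R : Type} [Ring R] (𝒢 : Finset (Finset ℕ+)) (V : ℕ+ → R) (W : Finset ℕ+ → R) :
    PolyIdx 𝒢 → R :=
  Sum.elim (fun S => VSmon V S.1) (fun S => W S.1)

def polyDeg (𝒢 : Finset (Finset ℕ+)) (m : ℕ) : PolyIdx 𝒢 → ℕ :=
  Sum.elim (fun S => S.1.card) (fun S => m - S.1.card)

def polyWeight (𝒢 : Finset (Finset ℕ+)) (s : ℕ) : PolyIdx 𝒢 → ℕ :=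
  Sum.elim (fun S => S.1.card) (fun S => s + 1 - S.1.card)

theorem polyBasis_eq_one_of_polyWeight_eq_zero {R : Type} [Ring R] {𝒢 : Finset (Finset ℕ+)}
    {V : ℕ+ → R} {W : Finset ℕ+ → R} {s : ℕ} (hs : ∀ S, Subgee 𝒢 S → S.card ≤ s)
    {i : PolyIdx 𝒢} (hi : polyWeight 𝒢 s i = 0) : polyBasis 𝒢 V W i = 1 := by
  rcases i with ⟨S, hS⟩ | ⟨S, hS⟩
  · obtain rfl : S = ∅ := Finset.card_eq_zero.1 hi
    exact VSmon_empty
  · have := hs S hS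
    simp only [polyWeight, Sum.elim_inr] at hi
    omega

section WeightFiltration

variable {R : Type} [Ring R] [Algebra ℚ R] (𝒜 : ℕ → Submodule ℚ R) [GradedAlgebra 𝒜]
  (𝒢 : Finset (Finset ℕ+)) (V : ℕ+ → R) (W : Finset ℕ+ → R) (s : ℕ)

def weightFil (w : ℕ) : Submodule ℚ R :=
  Submodule.span ℚ (polyBasis 𝒢 V W '' {i | w ≤ polyWeight 𝒢 s i})

noncomputable def tensorWeightFil (w : ℕ) : Submodule ℚ (𝒜 ᵍ⊗[ℚ] 𝒜) :=
  Submodule.span ℚ {q | ∃ i j, w ≤ polyWeight 𝒢 s i + polyWeight 𝒢 s j ∧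
    q = tm 𝒜 (polyBasis 𝒢 V W i) (polyBasis 𝒢 V W j)}

variable {𝒜 𝒢 V W s} (hs : ∀ S, Subgee 𝒢 S → S.card ≤ s)

include hs in
theorem polyWeight_le (i : PolyIdx 𝒢) : polyWeight 𝒢 s i ≤ s + 1 := by
  rcases i with ⟨S, hS⟩ | ⟨S, hS⟩
  · exact (hs S hS).trans (Nat.le_succ s)
  · exact Nat.sub_le _ _

theorem polyBasis_mem_weightFil {w : ℕ} {i : PolyIdx 𝒢} (hi : w ≤ polyWeight 𝒢 s i) :
    polyBasis 𝒢 V W i ∈ weightFil 𝒢 V W s w :=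
  Submodule.subset_span ⟨i, hi, rfl⟩

theorem weightFil_anti {a b : ℕ} (hab : a ≤ b) : weightFil 𝒢 V W s b ≤ weightFil 𝒢 V W s a :=
  Submodule.span_mono (Set.image_mono fun _ hi => hab.trans hi)

theorem tensorWeightFil_anti {a b : ℕ} (hab : a ≤ b) :
    tensorWeightFil 𝒜 𝒢 V W s b ≤ tensorWeightFil 𝒜 𝒢 V W s a :=
  Submodule.span_mono fun _ ⟨i, j, hij, hq⟩ => ⟨i, j, hab.trans hij, hq⟩

theorem tm_mem_tensorWeightFil {a b : ℕ} {x y : R} (hx : x ∈ weightFil 𝒢 V W s a)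
    (hy : y ∈ weightFil 𝒢 V W s b) : tm 𝒜 x y ∈ tensorWeightFil 𝒜 𝒢 V W s (a + b) := by
  let tmₗ := (TensorProduct.mk ℚ R R).compr₂ (GradedTensorProduct.of ℚ 𝒜 𝒜).toLinearMap
  have := Submodule.apply_mem_map₂ tmₗ hx hy
  rw [weightFil, weightFil, Submodule.map₂_span_span] at this
  refine Submodule.span_mono ?_ this
  rintro _ ⟨_, ⟨i, hi, rfl⟩, _, ⟨j, hj, rfl⟩, rfl⟩
  exact ⟨i, j, add_le_add hi hj, rfl⟩

include hs in
theorem tensorWeightFil_eq_bot : tensorWeightFil 𝒜 𝒢 V W s (2 * s + 3) = ⊥ := by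
  refine Submodule.span_eq_bot.2 fun _ ⟨i, j, hij, _⟩ => ?_
  have := polyWeight_le hs i
  have := polyWeight_le hs j
  omega

end WeightFiltration

namespace IsPolygonAlgebra

variable {n m s : ℕ} {𝒢 : Finset (Finset ℕ+)} {R : Type} [Ring R] [Algebra ℚ R]
  [FiniteDimensional ℚ R] {𝒜 : ℕ → Submodule ℚ R} [GradedAlgebra 𝒜] {V : ℕ+ → R}
  {W : Finset ℕ+ → R} {D S S' T : Finset ℕ+} {x y : R} {p d : ℕ}
  (h : IsPolygonAlgebra n m 𝒢 R 𝒜 V W)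
include h

theorem subset_bra (hS : Subgee 𝒢 S) : S ⊆ bra (n - 1) :=
  hS.subset_bra h.gee_sub

theorem V_mul_V_anticomm (hS : S ⊆ bra (n - 1)) :
    ∀ a ∈ S, ∀ b ∈ S, V a * V b = -(V b * V a) := fun a ha b hb => by
  simpa using h.gcomm 1 1 _ _ (h.V_mem a (mem_bra.1 (hS ha))) (h.V_mem b (mem_bra.1 (hS hb)))

theorem VSmon_mem (hS : S ⊆ bra (n - 1)) : VSmon V S ∈ 𝒜 S.card := by
  simpa [VSmon] using SetLike.list_prod_map_mem_graded (A := 𝒜) (S.sort (· ≤ ·)) (fun _ => 1) V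
    fun a ha => h.V_mem a (mem_bra.1 (hS ((Finset.mem_sort _).1 ha)))

theorem VSmon_eq_zero (hS : S ⊆ bra (n - 1)) (hS' : ¬Subgee 𝒢 S) : VSmon V S = 0 :=
  not_not.1 (mt (h.VS_ne S hS).1 hS')

theorem VSmon_mul_W_of_ne (hS : S ⊆ bra (n - 1)) (hT : Subgee 𝒢 T) (hcard : S.card = T.card)
    (hST : S ≠ T) : VSmon V S * W T = 0 := by
  by_cases hS' : Subgee 𝒢 S
  · rw [h.VW S T hS' hT hcard, if_neg hST]
  · rw [h.VSmon_eq_zero hS hS', zero_mul]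

theorem VSmon_mul_VSmon_mul_W_eq_zero (hS' : S' ⊆ bra (n - 1)) (hS : S ⊆ bra (n - 1))
    (hT : Subgee 𝒢 T) (hcard : S'.card + S.card = T.card)
    (hST : ¬(Disjoint S' S ∧ S' ∪ S = T)) : VSmon V S' * VSmon V S * W T = 0 := by
  have hU := Finset.union_subset hS' hS
  by_cases hd : Disjoint S' S
  · obtain ⟨c, -, hc⟩ := VSmon_mul_VSmon_of_disjoint (h.V_mul_V_anticomm hU) hd
    rw [hc, smul_mul_assoc, h.VSmon_mul_W_of_ne hU hT (by rwa [Finset.card_union_of_disjoint hd])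
      fun hU => hST ⟨hd, hU⟩, smul_zero]
  · rw [VSmon_mul_VSmon_of_not_disjoint (h.V_mul_V_anticomm hU) hd, zero_mul]

theorem polyBasis_mem (i : PolyIdx 𝒢) : polyBasis 𝒢 V W i ∈ 𝒜 (polyDeg 𝒢 m i) := by
  rcases i with ⟨S, hS⟩ | ⟨S, hS⟩
  · exact h.VSmon_mem (h.subset_bra hS)
  · exact h.W_mem S hS

theorem W_ne_zero (hS : Subgee 𝒢 S) : W S ≠ 0 :=
  h.basis_indep.ne_zero (Sum.inr (⟨S, hS⟩ : {S // Subgee 𝒢 S}))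

theorem tm_W_ne_zero (hS : Subgee 𝒢 S) (hT : Subgee 𝒢 T) : tm 𝒜 (W S) (W T) ≠ 0 := by
  let B := Module.Basis.mk h.basis_indep h.basis_span.ge
  have := (B.tensorProduct B).ne_zero (Sum.inr ⟨S, hS⟩, Sum.inr ⟨T, hT⟩)
  rw [Module.Basis.tensorProduct_apply, Module.Basis.mk_apply, Module.Basis.mk_apply] at this
  exact (map_ne_zero_iff _ (GradedTensorProduct.of ℚ 𝒜 𝒜).injective).2 this

theorem mem_span_polyBasis_of_mem (hx : x ∈ 𝒜 d) :
    x ∈ Submodule.span ℚ (polyBasis 𝒢 V W '' {i | polyDeg 𝒢 m i = d}) := by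
  have hx' : x ∈ (Submodule.span ℚ (Set.range (polyBasis 𝒢 V W))).map (GradedAlgebra.proj 𝒜 d) :=
    ⟨x, h.basis_span ▸ trivial, by
      simp [GradedAlgebra.proj_apply, DirectSum.decompose_of_mem_same 𝒜 hx]⟩
  rw [Submodule.map_span] at hx'
  refine Submodule.span_le.2 ?_ hx'
  rintro _ ⟨_, ⟨i, rfl⟩, rfl⟩
  rw [GradedAlgebra.proj_apply]
  by_cases hi : polyDeg 𝒢 m i = d
  · rw [DirectSum.decompose_of_mem_same 𝒜 (hi ▸ h.polyBasis_mem i)]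
    exact Submodule.subset_span ⟨i, hi, rfl⟩
  · rw [DirectSum.decompose_of_mem_ne 𝒜 (h.polyBasis_mem i) hi]
    exact Submodule.zero_mem _

private theorem forall_mem_map_V_sort (hD : D ⊆ bra (n - 1)) {z : R}
    (hz : ∀ j ∈ D, V j * z = 0) : ∀ u ∈ (D.sort (· ≤ ·)).map V, u ∈ 𝒜 1 ∧ u * z = 0 := by
  simp only [List.mem_map, Finset.mem_sort]
  rintro _ ⟨j, hj, rfl⟩
  exact ⟨h.V_mem j (mem_bra.1 (hD hj)), hz j hj⟩

theorem Vbar_mul_tm_of_mul_right (hD : D ⊆ bra (n - 1)) (hy : ∀ j ∈ D, V j * y = 0)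
    (hx : x ∈ 𝒜 p) : Vbar 𝒜 V D * tm 𝒜 x y = tm 𝒜 (VSmon V D * x) y := by
  rw [Vbar_eq_prod_map_ubar]
  exact List.prod_map_ubar_mul_tm_of_mul_right (h.forall_mem_map_V_sort hD hy) hx

theorem Vbar_mul_tm_of_mul_left (hD : D ⊆ bra (n - 1)) (hx0 : ∀ j ∈ D, V j * x = 0)
    (hx : x ∈ 𝒜 p) :
    Vbar 𝒜 V D * tm 𝒜 x y = (-1 : ℚ) ^ ((p + 1) * D.card) • tm 𝒜 x (VSmon V D * y) := by
  rw [Vbar_eq_prod_map_ubar, List.prod_map_ubar_mul_tm_of_mul_left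
    (h.forall_mem_map_V_sort hD hx0) hx, List.length_map, Finset.length_sort]
  rfl

theorem VSmon_mem_weightFil (hS : S ⊆ bra (n - 1)) : VSmon V S ∈ weightFil 𝒢 V W s S.card := by
  by_cases hS' : Subgee 𝒢 S
  · exact polyBasis_mem_weightFil (i := Sum.inl ⟨S, hS'⟩) le_rfl
  · rw [h.VSmon_eq_zero hS hS']
    exact Submodule.zero_mem _

theorem weightFil_zero : weightFil 𝒢 V W s 0 = ⊤ := by
  simp only [weightFil, zero_le, Set.ofPred_true, Set.image_univ]
  exact h.basis_span

theorem one_notMem_weightFil_one : (1 : R) ∉ weightFil 𝒢 V W s 1 := by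
  simpa [weightFil, polyBasis, VSmon_empty] using h.basis_indep.notMem_span_image
    (s := {i | 1 ≤ polyWeight 𝒢 s i}) (x := Sum.inl ⟨∅, .empty h.gee_nonempty⟩)
    (by simp [polyWeight])

variable (hs : ∀ S, Subgee 𝒢 S → S.card ≤ s)
include hs

theorem eq_zero_of_forall_VSmon_mul_eq_zero (hd : s < d) (hx : x ∈ 𝒜 d)
    (hV : ∀ S, Subgee 𝒢 S → S.card + d = m → VSmon V S * x = 0) : x = 0 := by
  obtain ⟨l, hl, rfl⟩ :=
    (Finsupp.mem_span_image_iff_linearCombination ℚ).1 (h.mem_span_polyBasis_of_mem hx)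
  have hsupp : ∀ i ∈ l.support, ∃ T hT, i = Sum.inr ⟨T, hT⟩ ∧ T.card + d = m := by
    intro i hi
    have hi := hl hi
    rcases i with ⟨T, hT⟩ | ⟨T, hT⟩ <;> simp only [polyDeg, Set.mem_ofPred_eq, Sum.elim_inl,
      Sum.elim_inr] at hi <;> have := hs T hT
    · omega
    · exact ⟨T, hT, rfl, by omega⟩
  suffices l.support = ∅ by simp [Finsupp.support_eq_empty.1 this]
  refine Finset.eq_empty_of_forall_notMem fun i hi => ?_
  obtain ⟨T, hT, rfl, hTd⟩ := hsupp _ hi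
  have h0 := hV T hT hTd
  rw [Finsupp.linearCombination_apply, Finsupp.sum, Finset.mul_sum,
    Finset.sum_eq_single_of_mem _ hi] at h0
  · simp only [polyBasis, Sum.elim_inr, mul_smul_comm, h.VW T T hT hT rfl, ite_true,
      smul_eq_zero] at h0
    exact Finsupp.mem_support_iff.1 hi (h0.resolve_right (h.W_ne_zero (.empty h.gee_nonempty)))
  · intro j hj hji
    obtain ⟨T', hT', rfl, hT'd⟩ := hsupp j hj
    have hTT' : T ≠ T' := by rintro rfl; exact hji rfl
    simp [polyBasis, h.VW T T' hT hT' (by omega), hTT']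

theorem mem_span_tm_one_one_sup_tensorWeightFil_one (q : 𝒜 ᵍ⊗[ℚ] 𝒜) :
    q ∈ (ℚ ∙ tm 𝒜 1 1) ⊔ tensorWeightFil 𝒜 𝒢 V W s 1 := by
  have hle : tensorWeightFil 𝒜 𝒢 V W s 0 ≤ (ℚ ∙ tm 𝒜 1 1) ⊔ tensorWeightFil 𝒜 𝒢 V W s 1 := by
    refine Submodule.span_le.2 ?_
    rintro _ ⟨i, j, -, rfl⟩
    by_cases hij : 1 ≤ polyWeight 𝒢 s i + polyWeight 𝒢 s j
    · exact Submodule.mem_sup_right (Submodule.subset_span ⟨i, j, hij, rfl⟩)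
    · rw [polyBasis_eq_one_of_polyWeight_eq_zero hs (by omega),
        polyBasis_eq_one_of_polyWeight_eq_zero hs (by omega)]
      exact Submodule.mem_sup_left (Submodule.mem_span_singleton_self _)
  refine hle ?_
  rw [← (GradedTensorProduct.of ℚ 𝒜 𝒜).apply_symm_apply q]
  induction (GradedTensorProduct.of ℚ 𝒜 𝒜).symm q using TensorProduct.induction_on with
  | zero => rw [map_zero]; exact Submodule.zero_mem _
  | tmul x y =>
    exact tm_mem_tensorWeightFil (a := 0) (b := 0) (h.weightFil_zero ▸ trivial)
      (h.weightFil_zero ▸ trivial)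
  | add x y hx hy => rw [map_add]; exact Submodule.add_mem _ hx hy

variable (hsm : 2 * s ≤ m)
include hsm

theorem VSmon_mul_W_of_not_subset (hS : S ⊆ bra (n - 1)) (hT : Subgee 𝒢 T) (hST : ¬S ⊆ T) :
    VSmon V S * W T = 0 := by
  have hT_le := hs T hT
  have hS_pos : 0 < S.card := Finset.card_pos.2 (Finset.nonempty_iff_ne_empty.2 (by
    rintro rfl; exact hST (Finset.empty_subset T)))
  refine h.eq_zero_of_forall_VSmon_mul_eq_zero hs (d := S.card + (m - T.card)) (by omega)
    (SetLike.mul_mem_graded (h.VSmon_mem hS) (h.W_mem T hT)) fun S' hS' hcard => ?_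
  rw [← mul_assoc]
  exact h.VSmon_mul_VSmon_mul_W_eq_zero (h.subset_bra hS') hS hT (by omega)
    fun ⟨_, hU⟩ => hST (hU ▸ Finset.subset_union_right)

theorem VSmon_mul_W_of_subset (hT : Subgee 𝒢 T) (hST : S ⊆ T) :
    ∃ c : ℚ, c ≠ 0 ∧ VSmon V S * W T = c • W (T \ S) := by
  rcases S.eq_empty_or_nonempty with rfl | hS_ne
  · exact ⟨1, one_ne_zero, by rw [VSmon_empty, one_mul, Finset.sdiff_empty, one_smul]⟩
  have hTS : Subgee 𝒢 (T \ S) := hT.of_subset Finset.sdiff_subset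
  have hTb := h.subset_bra hT
  obtain ⟨c, hc, hcV⟩ := VSmon_mul_VSmon_of_disjoint
    (h.V_mul_V_anticomm ((Finset.union_subset Finset.sdiff_subset hST).trans hTb))
    Finset.sdiff_disjoint
  rw [Finset.sdiff_union_of_subset hST] at hcV
  refine ⟨c, hc, sub_eq_zero.1 ?_⟩
  have hT_le := hs T hT
  have hS_le := Finset.card_le_card hST
  have hS_pos := hS_ne.card_pos
  have hdeg : m - (T \ S).card = S.card + (m - T.card) := by
    rw [Finset.card_sdiff_of_subset hST]
    omega
  refine h.eq_zero_of_forall_VSmon_mul_eq_zero hs (d := S.card + (m - T.card)) (by omega)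
    (Submodule.sub_mem _ (SetLike.mul_mem_graded (h.VSmon_mem (hST.trans hTb)) (h.W_mem T hT))
      (Submodule.smul_mem _ _ (hdeg ▸ h.W_mem _ hTS))) fun S' hS' hcard => ?_
  rw [mul_sub, mul_smul_comm, ← mul_assoc]
  by_cases hS'T : S' = T \ S
  · subst hS'T
    rw [hcV, smul_mul_assoc, h.VW T T hT hT rfl, h.VW _ _ hTS hTS rfl, if_pos rfl, if_pos rfl,
      sub_self]
  · rw [h.VSmon_mul_VSmon_mul_W_eq_zero (h.subset_bra hS') (hST.trans hTb) hT (by omega)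
        fun ⟨hd, hU⟩ => hS'T (by rw [← hU, Finset.union_sdiff_cancel_right hd]),
      h.VSmon_mul_W_of_ne (h.subset_bra hS') hTS (by omega) hS'T, smul_zero, sub_zero]

theorem V_mul_W_of_not_mem {a : ℕ+} (ha : a ∈ bra (n - 1)) (hT : Subgee 𝒢 T) (haT : a ∉ T) :
    V a * W T = 0 := by
  simpa [VSmon_singleton] using
    h.VSmon_mul_W_of_not_subset hs hsm (Finset.singleton_subset_iff.2 ha) hT (by simpa)

theorem W_mul_W (hS : Subgee 𝒢 S) (hT : Subgee 𝒢 T) : W S * W T = 0 := by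
  have hS_le := hs S hS
  have hT_le := hs T hT
  rcases (show S.card + T.card ≤ m by omega).eq_or_lt with hST | hST
  · exact h.WW S T hS hT hST
  · exact h.eq_zero_of_forall_VSmon_mul_eq_zero hs (by omega)
      (SetLike.mul_mem_graded (h.W_mem S hS) (h.W_mem T hT)) fun _ _ _ => by omega

theorem Vbar_mul_Vbar_mul_ubar_W_mul_ubar_W {A G : Finset ℕ+} (hA : Subgee 𝒢 A)
    (hG : Subgee 𝒢 G) (hAG : Disjoint A G) (hcard : A.card + G.card = m) :
    Vbar 𝒜 V A * Vbar 𝒜 V G * (ubar 𝒜 (W A) * ubar 𝒜 (W G)) =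
      (-2 : ℚ) • tm 𝒜 (W ∅) (W ∅) := by
  have hemp := Subgee.empty h.gee_nonempty
  have hWA : W A ∈ 𝒜 G.card := by simpa [← hcard] using h.W_mem A hA
  have hWG : W G ∈ 𝒜 A.card := by simpa [← hcard] using h.W_mem G hG
  have hWemp : W ∅ ∈ 𝒜 m := by simpa using h.W_mem ∅ hemp
  have hGA : ∀ j ∈ G, V j * W A = 0 := fun j hj =>
    h.V_mul_W_of_not_mem hs hsm (h.subset_bra hG hj) hA (Finset.disjoint_right.1 hAG hj)
  have hAemp : ∀ j ∈ A, V j * W ∅ = 0 := fun j hj =>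
    h.V_mul_W_of_not_mem hs hsm (h.subset_bra hA hj) hemp (Finset.notMem_empty j)
  have hVA : VSmon V A * W A = W ∅ := by rw [h.VW A A hA hA rfl, if_pos rfl]
  have hVG : VSmon V G * W G = W ∅ := by rw [h.VW G G hG hG rfl, if_pos rfl]
  have hsign : (-1 : ℚ) ^ (G.card * A.card) * (-1) ^ ((m + 1) * A.card) = 1 := by
    rw [← pow_add, ← hcard, show G.card * A.card + (A.card + G.card + 1) * A.card =
      2 * (G.card * A.card) + A.card * (A.card + 1) by ring]
    exact ((even_two_mul _).add (Nat.even_mul_succ_self _)).neg_one_pow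
  rw [ubar_mul_ubar hWA hWG (h.WW A G hA hG hcard), mul_assoc, mul_sub, mul_neg, mul_smul_comm,
    h.Vbar_mul_tm_of_mul_left (h.subset_bra hG) hGA hWA,
    h.Vbar_mul_tm_of_mul_right (h.subset_bra hG) hGA hWG, hVG,
    Even.neg_one_pow (by rw [mul_comm]; exact Nat.even_mul_succ_self _), one_smul, mul_sub,
    mul_neg, mul_smul_comm, h.Vbar_mul_tm_of_mul_right (h.subset_bra hA) hAemp hWA,
    h.Vbar_mul_tm_of_mul_left (h.subset_bra hA) hAemp hWemp, hVA, smul_smul, hsign]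
  module

theorem add_two_mem_zclSet {A G : Finset ℕ+} (hA : Subgee 𝒢 A) (hG : Subgee 𝒢 G)
    (hAG : Disjoint A G) (hcard : A.card + G.card = m) : m + 2 ∈ zclSet 𝒜 := by
  refine ⟨(A.sort (· ≤ ·)).map (fun i => ubar 𝒜 (V i)) ++
    (G.sort (· ≤ ·)).map (fun i => ubar 𝒜 (V i)) ++ [ubar 𝒜 (W A), ubar 𝒜 (W G)], ?_, ?_, ?_⟩
  · simp only [List.length_append, List.length_map, Finset.length_sort, List.length_cons,
      List.length_nil]
    omega
  · simp only [List.mem_append, List.mem_map, List.mem_cons, List.not_mem_nil, or_false]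
    rintro _ ((⟨i, -, rfl⟩ | ⟨i, -, rfl⟩) | rfl | rfl) <;> exact muMap_ubar _
  · rw [List.prod_append, List.prod_append, List.prod_cons, List.prod_cons, List.prod_nil,
      mul_one]
    change Vbar 𝒜 V A * Vbar 𝒜 V G * _ ≠ 0
    rw [h.Vbar_mul_Vbar_mul_ubar_W_mul_ubar_W hs hsm hA hG hAG hcard]
    have hemp := Subgee.empty h.gee_nonempty
    exact smul_ne_zero (by norm_num) (h.tm_W_ne_zero hemp hemp)

theorem VSmon_mul_W_mem_weightFil (hS : Subgee 𝒢 S) (hT : Subgee 𝒢 T) :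
    VSmon V S * W T ∈ weightFil 𝒢 V W s (S.card + (s + 1 - T.card)) := by
  by_cases hST : S ⊆ T
  · obtain ⟨c, -, hc⟩ := h.VSmon_mul_W_of_subset hs hsm hT hST
    rw [hc]
    refine Submodule.smul_mem _ _
      (polyBasis_mem_weightFil (i := Sum.inr ⟨T \ S, hT.of_subset Finset.sdiff_subset⟩) ?_)
    have := hs T hT
    have := Finset.card_le_card hST
    simp only [polyWeight, Sum.elim_inr, Finset.card_sdiff_of_subset hST]
    omega
  · rw [h.VSmon_mul_W_of_not_subset hs hsm (h.subset_bra hS) hT hST]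
    exact Submodule.zero_mem _

theorem polyBasis_mul_polyBasis_mem_weightFil (i j : PolyIdx 𝒢) :
    polyBasis 𝒢 V W i * polyBasis 𝒢 V W j ∈
      weightFil 𝒢 V W s (polyWeight 𝒢 s i + polyWeight 𝒢 s j) := by
  rcases i with ⟨S, hS⟩ | ⟨S, hS⟩ <;> rcases j with ⟨T, hT⟩ | ⟨T, hT⟩ <;>
    simp only [polyBasis, polyWeight, Sum.elim_inl, Sum.elim_inr]
  · have hV := h.V_mul_V_anticomm (Finset.union_subset (h.subset_bra hS) (h.subset_bra hT))
    by_cases hd : Disjoint S T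
    · obtain ⟨c, -, hc⟩ := VSmon_mul_VSmon_of_disjoint hV hd
      rw [hc, ← Finset.card_union_of_disjoint hd]
      exact Submodule.smul_mem _ _
        (h.VSmon_mem_weightFil (Finset.union_subset (h.subset_bra hS) (h.subset_bra hT)))
    · rw [VSmon_mul_VSmon_of_not_disjoint hV hd]
      exact Submodule.zero_mem _
  · exact h.VSmon_mul_W_mem_weightFil hs hsm hS hT
  · rw [h.gcomm _ _ _ _ (h.W_mem S hS) (h.VSmon_mem (h.subset_bra hT)), add_comm]
    exact Submodule.smul_mem _ _ (h.VSmon_mul_W_mem_weightFil hs hsm hT hS)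
  · rw [h.W_mul_W hs hsm hS hT]
    exact Submodule.zero_mem _

theorem muMap_mem_weightFil {w : ℕ} {q : 𝒜 ᵍ⊗[ℚ] 𝒜} (hq : q ∈ tensorWeightFil 𝒜 𝒢 V W s w) :
    muMap 𝒜 q ∈ weightFil 𝒢 V W s w := by
  have := Submodule.mem_map_of_mem (f := muMap 𝒜) hq
  rw [tensorWeightFil, Submodule.map_span] at this
  refine Submodule.span_le.2 ?_ this
  rintro _ ⟨_, ⟨i, j, hij, rfl⟩, rfl⟩
  rw [muMap_tm]
  exact weightFil_anti hij (h.polyBasis_mul_polyBasis_mem_weightFil hs hsm i j)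

theorem tensorWeightFil_mul (a b : ℕ) :
    tensorWeightFil 𝒜 𝒢 V W s a * tensorWeightFil 𝒜 𝒢 V W s b ≤
      tensorWeightFil 𝒜 𝒢 V W s (a + b) := by
  rw [tensorWeightFil, tensorWeightFil, Submodule.span_mul_span]
  refine Submodule.span_le.2 ?_
  rintro _ ⟨_, ⟨i, j, hij, rfl⟩, _, ⟨k, l, hkl, rfl⟩, rfl⟩
  dsimp only
  rw [tm_mul_tm _ _ (h.polyBasis_mem j) (h.polyBasis_mem k)]
  refine Submodule.smul_mem _ _ (tensorWeightFil_anti ?_ (tm_mem_tensorWeightFil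
    (h.polyBasis_mul_polyBasis_mem_weightFil hs hsm i k)
    (h.polyBasis_mul_polyBasis_mem_weightFil hs hsm j l)))
  omega

theorem mem_tensorWeightFil_one_of_muMap_eq_zero {q : 𝒜 ᵍ⊗[ℚ] 𝒜} (hq : muMap 𝒜 q = 0) :
    q ∈ tensorWeightFil 𝒜 𝒢 V W s 1 := by
  obtain ⟨_, hc, z, hz, rfl⟩ :=
    Submodule.mem_sup.1 (h.mem_span_tm_one_one_sup_tensorWeightFil_one hs q)
  obtain ⟨c, rfl⟩ := Submodule.mem_span_singleton.1 hc
  rw [map_add, map_smul, muMap_tm, one_mul, add_eq_zero_iff_eq_neg] at hq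
  obtain rfl : c = 0 := by
    by_contra hc0
    have := Submodule.smul_mem _ c⁻¹ (Submodule.neg_mem _ (h.muMap_mem_weightFil hs hsm hz))
    rw [← hq, smul_smul, inv_mul_cancel₀ hc0, one_smul] at this
    exact h.one_notMem_weightFil_one this
  rwa [zero_smul, zero_add]

theorem list_prod_mem_tensorWeightFil {L : List (𝒜 ᵍ⊗[ℚ] 𝒜)} (hL : ∀ q ∈ L, muMap 𝒜 q = 0) :
    L.prod ∈ tensorWeightFil 𝒜 𝒢 V W s L.length := by
  induction L with
  | nil =>
    have hemp : Subgee 𝒢 ∅ := .empty h.gee_nonempty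
    refine Submodule.subset_span ⟨Sum.inl ⟨∅, hemp⟩, Sum.inl ⟨∅, hemp⟩, Nat.zero_le _, ?_⟩
    simp only [polyBasis, Sum.elim_inl, VSmon_empty]
    rfl
  | cons q L ih =>
    rw [List.prod_cons, List.length_cons, add_comm]
    exact h.tensorWeightFil_mul hs hsm 1 L.length <| Submodule.mul_mem_mul
      (h.mem_tensorWeightFil_one_of_muMap_eq_zero hs hsm (hL q List.mem_cons_self))
      (ih fun x hx => hL x (List.mem_cons_of_mem q hx))

theorem le_of_mem_zclSet {b : ℕ} (hb : b ∈ zclSet 𝒜) : b ≤ 2 * s + 2 := by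
  obtain ⟨L, rfl, hL, hne⟩ := hb
  by_contra hlt
  have := tensorWeightFil_anti (a := 2 * s + 3) (by omega)
    (h.list_prod_mem_tensorWeightFil hs hsm hL)
  rw [tensorWeightFil_eq_bot hs, Submodule.mem_bot] at this
  exact hne this

end IsPolygonAlgebra

theorem card_Icc_gee {k : ℕ} (hk : 1 ≤ k) :
    (Finset.Icc (⟨k + 2, by omega⟩ : ℕ+) ⟨2 * k, by omega⟩).card = k - 1 := by
  change ((Finset.Icc (k + 2) (2 * k)).subtype (0 < ·)).card = k - 1
  rw [Finset.card_subtype, Finset.filter_true_of_mem fun _ h => by simp at h; omega,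
    Nat.card_Icc]
  omega

theorem lt_of_mem_bra_of_mem_Icc_gee {k : ℕ} (hk : 1 ≤ k) {a b : ℕ+} (ha : a ∈ bra (k - 1))
    (hb : b ∈ Finset.Icc (⟨k + 2, by omega⟩ : ℕ+) ⟨2 * k, by omega⟩) : a < b := by
  have ha' := mem_bra.1 ha
  have hb' : k + 2 ≤ (b : ℕ) := ((Finset.mem_Icc (α := {n : ℕ // 0 < n})).1 hb).1
  exact PNat.coe_lt_coe _ _ |>.1 (by omega)

/-- For the equilateral `(2k+1)`-gon, with single gee `{k+2, …, 2k}`, `n = 2k+1` and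
`m = 2k−2`, every algebra of type `(𝒢, m, n)` has zero-divisor-cup-length exactly `2k`. -/
theorem stmt_16 (k : ℕ) (hk : 2 ≤ k)
    (R : Type) [Ring R] [Algebra ℚ R] [FiniteDimensional ℚ R]
    (𝒜 : ℕ → Submodule ℚ R) [GradedAlgebra 𝒜] (V : ℕ+ → R) (W : Finset ℕ+ → R)
    (h : IsPolygonAlgebra (2 * k + 1) (2 * k - 2)
      {Finset.Icc (⟨k + 2, by omega⟩ : ℕ+) ⟨2 * k, by omega⟩} R 𝒜 V W) :
    IsGreatest (zclSet 𝒜) (2 * k) := by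
  set G : Finset ℕ+ := Finset.Icc (⟨k + 2, by omega⟩ : ℕ+) ⟨2 * k, by omega⟩
  have hG : G.card = k - 1 := card_Icc_gee (by omega)
  have hlt : ∀ a ∈ bra (k - 1), ∀ b ∈ G, a < b := fun _ ha _ hb =>
    lt_of_mem_bra_of_mem_Icc_gee (by omega) ha hb
  have hs (S : Finset ℕ+) (hS : Subgee {G} S) : S.card ≤ k - 1 := by
    obtain ⟨_, hG', hle⟩ := hS.exists_card_le
    rwa [Finset.mem_singleton.1 hG', hG] at hle
  have hA : Subgee {G} (bra (k - 1)) := ⟨G, Finset.mem_singleton_self G,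
    MLE.of_forall_le (by rw [Finset.card_val, Finset.card_val, card_bra, hG])
      fun a ha b hb => (hlt a ha b hb).le⟩
  refine ⟨?_, fun b hb => ?_⟩
  · have := h.add_two_mem_zclSet hs (by omega) hA (.of_mem (Finset.mem_singleton_self G))
      (Finset.disjoint_left.2 fun a ha hb => (hlt a ha a hb).false)
      (by rw [card_bra, hG]; omega)
    rwa [show 2 * k - 2 + 2 = 2 * k by omega] at this
  · have := h.le_of_mem_zclSet hs (by omega) hb
    omega
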